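/- Conservation of the energy functional: let γ1 > 0, δ1 > 0, γ2, δ2 be real constants and γ = 7/48, and let η : ℝ × [0,T] → ℝ be a smooth solution of the fifth-order KdV–BBM equation such that x ↦ η(x,t) is a Schwartz function for each t and t ↦ η(·,t) is smooth into the Schwartz space. Then the functional E(η(·,t)) := (1/2) ∫_ℝ ( η(x,t)² + γ1 η_x(x,t)² + δ1 η_{xx}(x,t)² ) dx is independent of t ∈ [0,T]; in particular E(η(·,t)) = E(η(·,0)) for all t. -/

import Mathlib

/-!
Pair the equation with `η` in `L²`. Integration by parts turns the pairing of `η` with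
`(1 - γ1 ∂ₓ² + δ1 ∂ₓ⁴) η_t` into `⟪η, η_t⟫ + γ1 ⟪η_x, η_xt⟫ + δ1 ⟪η_xx, η_xxt⟫`, the time
derivative of `E`. Every remaining term of the equation, multiplied by `η`, is an exact
`x`-derivative of a Schwartz function and integrates to zero; for the cubic dispersive terms this
is where `γ = 7/48` enters: `η ((η²)_xxx - (η_x²)_x) = (η (η²)_xx - η_x (η²)_x)_x`.
-/

noncomputable section
open MeasureTheory Real Set Filter Topology
open scoped SchwartzMap

local notation "𝒟" => SchwartzMap.derivCLM ℝ ℝ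
local notation "toL2" => SchwartzMap.toLpCLM ℝ ℝ 2 (volume : Measure ℝ)
local infixl:70 " ⬝ " => SchwartzMap.pairing (ContinuousLinearMap.mul ℝ ℝ)

theorem hasDerivWithinAt_of_tendsto_slope_zero {G : Type*} [NormedAddCommGroup G]
    [NormedSpace ℝ G] {f : ℝ → G} {f' : G} {s : Set ℝ} {t : ℝ}
    (hf : Tendsto (fun h => h⁻¹ • (f (t + h) - f t)) (𝓝[{h | h ≠ 0 ∧ t + h ∈ s}] 0) (𝓝 f')) :
    HasDerivWithinAt f f' s t := by
  rw [hasDerivWithinAt_iff_tendsto_slope]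
  have hshift : Tendsto (fun y => y - t) (𝓝[s \ {t}] t) (𝓝[{h | h ≠ 0 ∧ t + h ∈ s}] 0) := by
    refine tendsto_nhdsWithin_of_tendsto_nhds_of_eventually_within _ ?_ ?_
    · exact tendsto_nhdsWithin_of_tendsto_nhds (by simpa using (continuous_sub_right t).tendsto t)
    · filter_upwards [self_mem_nhdsWithin] with y hy
      exact ⟨sub_ne_zero.2 hy.2, by simpa using hy.1⟩
  exact (hf.comp hshift).congr fun y => by simp [slope_def_module]

theorem ContinuousLinearMap.hasDerivWithinAt_comp_of_tendsto_slope_zero {V G : Type*}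
    [AddCommGroup V] [Module ℝ V] [TopologicalSpace V] [NormedAddCommGroup G] [NormedSpace ℝ G]
    (A : V →L[ℝ] G) {u : ℝ → V} {u' : V} {s : Set ℝ} {t : ℝ}
    (hu : Tendsto (fun h => h⁻¹ • (u (t + h) - u t)) (𝓝[{h | h ≠ 0 ∧ t + h ∈ s}] 0) (𝓝 u')) :
    HasDerivWithinAt (fun r => A (u r)) (A u') s t :=
  hasDerivWithinAt_of_tendsto_slope_zero <|
    ((A.continuous.tendsto u').comp hu).congr fun h => by simp

namespace SchwartzMap

theorem inner_toLp_two_eq_integral {E : Type*} [NormedAddCommGroup E] [NormedSpace ℝ E]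
    [MeasurableSpace E] [OpensMeasurableSpace E] {μ : Measure E} [μ.HasTemperateGrowth]
    (f g : 𝓢(E, ℝ)) : inner ℝ (f.toLp 2 μ) (g.toLp 2 μ) = ∫ x, f x * g x ∂μ := by
  rw [L2.inner_def]
  refine integral_congr_ae ?_
  filter_upwards [f.coeFn_toLp 2 μ, g.coeFn_toLp 2 μ] with x hf hg
  simp [hf, hg, mul_comm]

theorem inner_toLpCLM_derivCLM (f g : 𝓢(ℝ, ℝ)) :
    inner ℝ (toL2 f) (toL2 (𝒟 g)) = -inner ℝ (toL2 (𝒟 f)) (toL2 g) := by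
  simp only [toLpCLM_apply, inner_toLp_two_eq_integral, derivCLM_apply]
  exact integral_mul_deriv_eq_neg_deriv_mul f g

theorem deriv_eq_derivCLM (f : 𝓢(ℝ, ℝ)) : deriv f = ⇑(𝒟 f) := rfl

theorem iteratedDeriv_eq_iterate_derivCLM (f : 𝓢(ℝ, ℝ)) (n : ℕ) :
    iteratedDeriv n f = ⇑((⇑𝒟)^[n] f) := by
  induction n with
  | zero => simp
  | succ n ih => rw [iteratedDeriv_succ, ih, deriv_eq_derivCLM, Function.iterate_succ_apply']

theorem derivCLM_pairing_mul (f g : 𝓢(ℝ, ℝ)) : 𝒟 (f ⬝ g) = 𝒟 f ⬝ g + f ⬝ 𝒟 g := by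
  ext x
  simp [pairing_apply, deriv_fun_mul f.differentiableAt g.differentiableAt]

theorem integral_derivCLM (f : 𝓢(ℝ, ℝ)) : ∫ x, 𝒟 f x = 0 :=
  integral_eq_zero_of_hasDerivAt_of_integrable f.hasDerivAt (𝒟 f).integrable f.integrable

end SchwartzMap

namespace KdVBBM

def energy (γ1 δ1 : ℝ) (f : 𝓢(ℝ, ℝ)) : ℝ :=
  ‖toL2 f‖ ^ 2 + γ1 * ‖toL2 (𝒟 f)‖ ^ 2 + δ1 * ‖toL2 (𝒟 (𝒟 f))‖ ^ 2

theorem integral_energyDensity (γ1 δ1 : ℝ) (f : 𝓢(ℝ, ℝ)) :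
    ∫ x, (f x ^ 2 + γ1 * deriv f x ^ 2 + δ1 * iteratedDeriv 2 f x ^ 2) = energy γ1 δ1 f := by
  have hsq (g : 𝓢(ℝ, ℝ)) : ‖toL2 g‖ ^ 2 = ∫ x, g x ^ 2 := by
    rw [← real_inner_self_eq_norm_sq, SchwartzMap.toLpCLM_apply,
      SchwartzMap.inner_toLp_two_eq_integral]
    simp [sq]
  have hint (g : 𝓢(ℝ, ℝ)) : Integrable fun x => g x ^ 2 :=
    (g ⬝ g).integrable.congr (ae_of_all _ fun x => by simp [sq])
  rw [SchwartzMap.iteratedDeriv_eq_iterate_derivCLM, SchwartzMap.deriv_eq_derivCLM, energy,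
    hsq, hsq, hsq, integral_add, integral_add, integral_const_mul, integral_const_mul]
  · simp
  · exact hint f
  · exact (hint _).const_mul γ1
  · exact (hint f).add ((hint _).const_mul γ1)
  · exact (hint _).const_mul δ1

def bbmOperator (γ1 δ1 : ℝ) (u : 𝓢(ℝ, ℝ)) : 𝓢(ℝ, ℝ) :=
  u - γ1 • 𝒟 (𝒟 u) + δ1 • 𝒟 (𝒟 (𝒟 (𝒟 u)))

theorem hasDerivWithinAt_energy (γ1 δ1 : ℝ) {u : ℝ → 𝓢(ℝ, ℝ)} {u' : 𝓢(ℝ, ℝ)}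
    {s : Set ℝ} {t : ℝ}
    (hu : Tendsto (fun h => h⁻¹ • (u (t + h) - u t)) (𝓝[{h | h ≠ 0 ∧ t + h ∈ s}] 0) (𝓝 u')) :
    HasDerivWithinAt (fun r => energy γ1 δ1 (u r))
      (2 * inner ℝ (toL2 (u t)) (toL2 (bbmOperator γ1 δ1 u'))) s t := by
  have h0 := (toL2).hasDerivWithinAt_comp_of_tendsto_slope_zero hu
  have h1 := ((toL2).comp 𝒟).hasDerivWithinAt_comp_of_tendsto_slope_zero hu
  have h2 := (((toL2).comp 𝒟).comp 𝒟).hasDerivWithinAt_comp_of_tendsto_slope_zero hu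
  refine ((h0.norm_sq.add (h1.norm_sq.const_mul γ1)).add
    (h2.norm_sq.const_mul δ1)).congr_deriv ?_
  simp only [bbmOperator, ContinuousLinearMap.comp_apply, map_add, map_sub, map_smul,
    inner_add_right, inner_sub_right, inner_smul_right, SchwartzMap.inner_toLpCLM_derivCLM]
  ring

def spatialPart (γ2 δ2 : ℝ) (v : 𝓢(ℝ, ℝ)) : 𝓢(ℝ, ℝ) :=
  𝒟 v + γ2 • 𝒟 (𝒟 (𝒟 v)) + δ2 • 𝒟 (𝒟 (𝒟 (𝒟 (𝒟 v)))) + (3 / 4 : ℝ) • 𝒟 (v ⬝ v)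
    + (7 / 48 : ℝ) • (𝒟 (𝒟 (𝒟 (v ⬝ v))) - 𝒟 (𝒟 v ⬝ 𝒟 v)) - (1 / 8 : ℝ) • 𝒟 (v ⬝ (v ⬝ v))

def energyFlux (γ2 δ2 : ℝ) (v : 𝓢(ℝ, ℝ)) : 𝓢(ℝ, ℝ) :=
  (1 / 2 : ℝ) • (v ⬝ v) + γ2 • (v ⬝ 𝒟 (𝒟 v) - (1 / 2 : ℝ) • (𝒟 v ⬝ 𝒟 v))
    + δ2 • (v ⬝ 𝒟 (𝒟 (𝒟 (𝒟 v))) - 𝒟 v ⬝ 𝒟 (𝒟 (𝒟 v)) + (1 / 2 : ℝ) • (𝒟 (𝒟 v) ⬝ 𝒟 (𝒟 v)))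
    + (1 / 2 : ℝ) • (v ⬝ (v ⬝ v)) + (7 / 48 : ℝ) • (v ⬝ 𝒟 (𝒟 (v ⬝ v)) - 𝒟 v ⬝ 𝒟 (v ⬝ v))
    - (3 / 32 : ℝ) • ((v ⬝ v) ⬝ (v ⬝ v))

theorem pairing_spatialPart_eq_derivCLM_energyFlux (γ2 δ2 : ℝ) (v : 𝓢(ℝ, ℝ)) :
    v ⬝ spatialPart γ2 δ2 v = 𝒟 (energyFlux γ2 δ2 v) := by
  ext x
  simp only [spatialPart, energyFlux, map_add, map_sub, map_smul,
    SchwartzMap.derivCLM_pairing_mul, add_apply, sub_apply, smul_apply,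
    SchwartzMap.pairing_apply_apply, ContinuousLinearMap.mul_apply', smul_eq_mul]
  ring

theorem inner_toLpCLM_spatialPart_eq_zero (γ2 δ2 : ℝ) (v : 𝓢(ℝ, ℝ)) :
    inner ℝ (toL2 v) (toL2 (spatialPart γ2 δ2 v)) = 0 := by
  rw [SchwartzMap.toLpCLM_apply, SchwartzMap.toLpCLM_apply,
    SchwartzMap.inner_toLp_two_eq_integral,
    ← SchwartzMap.integral_derivCLM (energyFlux γ2 δ2 v),
    ← pairing_spatialPart_eq_derivCLM_energyFlux]
  rfl

theorem bbmOperator_eq_neg_spatialPart (γ1 γ2 δ1 δ2 : ℝ) (u v : 𝓢(ℝ, ℝ))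
    (heq : ∀ x : ℝ,
      u x + deriv (⇑v) x
        - γ1 * iteratedDeriv 2 (⇑u) x
        + γ2 * iteratedDeriv 3 (⇑v) x
        + δ1 * iteratedDeriv 4 (⇑u) x
        + δ2 * iteratedDeriv 5 (⇑v) x
        + (3 / 4) * deriv (fun y => v y ^ 2) x
        + (7 / 48) * iteratedDeriv 3 (fun y => v y ^ 2) x
        - (7 / 48) * deriv (fun y => (deriv (⇑v) y) ^ 2) x
        - (1 / 8) * deriv (fun y => v y ^ 3) x = 0) :
    bbmOperator γ1 δ1 u = -spatialPart γ2 δ2 v := by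
  have hsq : (fun y => v y ^ 2) = ⇑(v ⬝ v) := by ext y; simp [sq]
  have hdsq : (fun y => deriv v y ^ 2) = ⇑(𝒟 v ⬝ 𝒟 v) := by ext y; simp [sq]
  have hcube : (fun y => v y ^ 3) = ⇑(v ⬝ (v ⬝ v)) := by ext y; simp; ring
  ext x
  have h := heq x
  simp only [hsq, hdsq, hcube] at h
  simp only [SchwartzMap.iteratedDeriv_eq_iterate_derivCLM, SchwartzMap.deriv_eq_derivCLM,
    Function.iterate_succ_apply', Function.iterate_zero_apply] at h
  simp only [bbmOperator, spatialPart, add_apply, sub_apply, smul_apply, neg_apply, smul_eq_mul]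
  linarith

end KdVBBM

open KdVBBM

theorem energy_conservation (γ1 δ1 γ2 δ2 T : ℝ)
    (hT : 0 < T)
    (η : ℝ → SchwartzMap ℝ ℝ) (D : ℕ → ℝ → SchwartzMap ℝ ℝ) (hD0 : D 0 = η)
    (hDdiff : ∀ n : ℕ, ∀ t ∈ Icc (0 : ℝ) T,
      Tendsto (fun h : ℝ => h⁻¹ • (D n (t + h) - D n t))
        (nhdsWithin 0 {h : ℝ | h ≠ 0 ∧ t + h ∈ Icc (0 : ℝ) T}) (nhds (D (n + 1) t)))
    -- `η` solves the fifth-order KdV–BBM equation with `γ = 7/48` on `ℝ × [0,T]`: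
    (heq : ∀ t ∈ Icc (0 : ℝ) T, ∀ x : ℝ,
      D 1 t x + deriv (fun y => η t y) x
        - γ1 * iteratedDeriv 2 (fun y => D 1 t y) x
        + γ2 * iteratedDeriv 3 (fun y => η t y) x
        + δ1 * iteratedDeriv 4 (fun y => D 1 t y) x
        + δ2 * iteratedDeriv 5 (fun y => η t y) x
        + (3 / 4) * deriv (fun y => η t y ^ 2) x
        + (7 / 48) * iteratedDeriv 3 (fun y => η t y ^ 2) x
        - (7 / 48) * deriv (fun y => (deriv (fun z => η t z) y) ^ 2) x
        - (1 / 8) * deriv (fun y => η t y ^ 3) x = 0) :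
    -- conclusion: conservation of the energy
    ∀ t ∈ Icc (0 : ℝ) T,
      (1 / 2) * (∫ x : ℝ,
          (η t x ^ 2 + γ1 * (deriv (fun y => η t y) x) ^ 2
            + δ1 * (iteratedDeriv 2 (fun y => η t y) x) ^ 2)) =
        (1 / 2) * ∫ x : ℝ,
          (η 0 x ^ 2 + γ1 * (deriv (fun y => η 0 y) x) ^ 2
            + δ1 * (iteratedDeriv 2 (fun y => η 0 y) x) ^ 2) := by
  have hE : ∀ s ∈ Icc (0 : ℝ) T,
      HasDerivWithinAt (fun r => energy γ1 δ1 (η r)) 0 (Icc 0 T) s := by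
    intro s hs
    have h := hasDerivWithinAt_energy γ1 δ1 (hD0 ▸ hDdiff 0 s hs)
    rwa [bbmOperator_eq_neg_spatialPart γ1 γ2 δ1 δ2 (D 1 s) (η s) (heq s hs), map_neg,
      inner_neg_right, inner_toLpCLM_spatialPart_eq_zero, neg_zero, mul_zero] at h
  have hconst := constant_of_derivWithin_zero (fun s hs => (hE s hs).differentiableWithinAt)
    fun s hs => (hE s (Ico_subset_Icc_self hs)).derivWithin
      (uniqueDiffOn_Icc hT s (Ico_subset_Icc_self hs))
  intro t ht
  rw [integral_energyDensity, integral_energyDensity, hconst t ht]
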